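/- arXiv:2406.19559 — 3 statements merged into one kernel-verified Lean document; each statement's English description precedes it below -/
import Mathlib

section
/- Let K be a sub-Markov kernel on a measurable space (X,𝒳), let λ>0 and let x∈X be such that Z := ∑_{ℓ=0}^∞ λ^{-ℓ}K^ℓ(x,X) < ∞. Define the probability measure μ = Z^{-1} ∑_{ℓ=0}^∞ λ^{-ℓ}K^ℓ(x,·). Then μK = λμ − (λ/Z)δ_x; in particular μK ≤ λμ as measures, μK^ℓ ≤ λ^ℓ μ for every ℓ ≥ 1, and for every a₁ > λ one has ∫_X μ(dy) ∑_{ℓ=0}^∞ a₁^{-ℓ}K^ℓ(y,X) ≤ a₁/(a₁−λ). -/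
/-!
Write `R_r(x, ·) = ∑_ℓ r^ℓ K^ℓ(x, ·)` with `r = λ⁻¹`. Splitting off the term `ℓ = 0` gives the
resolvent equation `R_r(x, ·) = δ_x + r · R_r(x, ·) K`, which after normalisation by its total mass
`Z` is the identity `μK + (λ/Z) δ_x = λμ`. Dropping `δ_x` gives `μK ≤ λμ`, and since `ν ↦ νK` is
monotone this iterates to `μK^ℓ ≤ λ^ℓ μ`. Summing the latter against `a₁^{-ℓ}` bounds the
`a₁`-resolvent of `μ` by the geometric series `∑_ℓ (λ/a₁)^ℓ = a₁/(a₁ - λ)`.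
-/

open MeasureTheory ProbabilityTheory
open scoped ENNReal

namespace QSDgen

variable {X : Type*}

/-- Iterates `K^ℓ` of a (sub-Markov) kernel, seen as measure-valued maps:
`K^0(x,·) = δ_x` and `K^{ℓ+1}(x,·) = ∫ K^ℓ(x,dy) K(y,·)`. -/
noncomputable def kpow [MeasurableSpace X] (K : Kernel X X) : ℕ → X → Measure X
  | 0, x => Measure.dirac x
  | (n + 1), x => (kpow K n x).bind fun y => K y

theorem _root_.ENNReal.inv_one_sub_ofReal_inv_mul {a b : ℝ} (hb : 0 ≤ b) (hba : b < a) :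
    (1 - ENNReal.ofReal a⁻¹ * ENNReal.ofReal b)⁻¹ = ENNReal.ofReal (a / (a - b)) := by
  have ha : 0 < a := hb.trans_lt hba
  have hq : 1 - a⁻¹ * b = (a - b) / a := by field_simp
  rw [← ENNReal.ofReal_mul (inv_nonneg.2 ha.le), ← ENNReal.ofReal_one,
    ← ENNReal.ofReal_sub _ (mul_nonneg (inv_nonneg.2 ha.le) hb), hq,
    ← ENNReal.ofReal_inv_of_pos (div_pos (sub_pos.2 hba) ha), inv_div]

theorem _root_.MeasureTheory.Measure.bind_mono {α β : Type*} [MeasurableSpace α]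
    [MeasurableSpace β] {μ ν : Measure α} (h : μ ≤ ν) {f : α → Measure β} (hf : Measurable f) :
    μ.bind f ≤ ν.bind f := by
  refine Measure.le_iff.2 fun s hs => ?_
  rw [Measure.bind_apply hs hf.aemeasurable, Measure.bind_apply hs hf.aemeasurable]
  exact lintegral_mono' h le_rfl

section

variable [MeasurableSpace X]

namespace kpow

variable (K : Kernel X X)

theorem measurable (n : ℕ) : Measurable (kpow K n) := by
  induction n with
  | zero => exact Measure.measurable_dirac
  | succ n ih => exact (Measure.measurable_bind' K.measurable).comp ih

theorem bind_succ (μ : Measure X) (n : ℕ) :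
    μ.bind (kpow K (n + 1)) = (μ.bind (kpow K n)).bind K :=
  (Measure.bind_bind (measurable K n).aemeasurable K.measurable.aemeasurable).symm

theorem bind_le_pow_smul {μ : Measure X} {c : ℝ≥0∞} (h : μ.bind K ≤ c • μ) (n : ℕ) :
    μ.bind (kpow K n) ≤ c ^ n • μ := by
  induction n with
  | zero => simp only [kpow, pow_zero, one_smul]; exact Measure.bind_dirac.le
  | succ n ih =>
    calc μ.bind (kpow K (n + 1)) = (μ.bind (kpow K n)).bind K := bind_succ K μ n
      _ ≤ (c ^ n • μ).bind K := Measure.bind_mono ih K.measurable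
      _ = c ^ n • μ.bind K := Measure.bind_smul _ _ _
      _ ≤ c ^ n • c • μ := by gcongr
      _ = c ^ (n + 1) • μ := by rw [smul_smul, pow_succ]

end kpow

noncomputable def resolvent (K : Kernel X X) (r : ℝ≥0∞) (x : X) : Measure X :=
  Measure.sum fun ℓ => r ^ ℓ • kpow K ℓ x

namespace resolvent

variable (K : Kernel X X) (r : ℝ≥0∞) (x : X)

theorem apply {s : Set X} (hs : MeasurableSet s) :
    resolvent K r x s = ∑' ℓ, r ^ ℓ * kpow K ℓ x s := by
  simp only [resolvent, Measure.sum_apply _ hs, Measure.smul_apply, smul_eq_mul]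

theorem bind_eq : (resolvent K r x).bind K = Measure.sum fun ℓ => r ^ ℓ • kpow K (ℓ + 1) x := by
  rw [resolvent, Measure.bind_sum _ _ K.measurable.aemeasurable]
  simp only [Measure.bind_smul]
  rfl

theorem dirac_add_smul_bind : Measure.dirac x + r • (resolvent K r x).bind K = resolvent K r x := by
  ext s hs
  rw [apply K r x hs, tsum_eq_zero_add' ENNReal.summable, Measure.add_apply, Measure.smul_apply,
    bind_eq, Measure.sum_apply _ hs, smul_eq_mul, ← ENNReal.tsum_mul_left]
  simp only [Measure.smul_apply, smul_eq_mul, pow_zero, one_mul, pow_succ, kpow]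
  congr 1
  exact tsum_congr fun ℓ => by ring

theorem dirac_le : Measure.dirac x ≤ resolvent K r x :=
  dirac_add_smul_bind K r x ▸ Measure.le_add_right le_rfl

instance : NeZero (resolvent K r x) :=
  ⟨fun h => Measure.dirac_ne_zero (le_bot_iff.1 (h ▸ dirac_le K r x))⟩

theorem smul_bind_add_smul_dirac {L : ℝ≥0∞} (hrL : r * L = 1) (c : ℝ≥0∞) :
    (c • resolvent K r x).bind K + (L * c) • Measure.dirac x = L • c • resolvent K r x := by
  conv_rhs => rw [← dirac_add_smul_bind K r x]
  rw [Measure.bind_smul, smul_add, smul_add, smul_smul, smul_smul, smul_smul, add_comm]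
  congr 2
  calc c = c * (r * L) := by rw [hrL, mul_one]
    _ = L * c * r := by ring

theorem lintegral_le {μ : Measure X} {c : ℝ≥0∞} (h : μ.bind K ≤ c • μ) (s : Set X)
    (hs : MeasurableSet s) : ∫⁻ y, resolvent K r y s ∂μ ≤ (1 - r * c)⁻¹ * μ s := by
  have hmeas : ∀ ℓ, Measurable fun y => kpow K ℓ y s := fun ℓ =>
    (Measure.measurable_coe hs).comp (kpow.measurable K ℓ)
  calc ∫⁻ y, resolvent K r y s ∂μ = ∑' ℓ, r ^ ℓ * μ.bind (kpow K ℓ) s := by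
        simp_rw [apply K r _ hs]
        rw [lintegral_tsum fun ℓ => ((hmeas ℓ).const_mul _).aemeasurable]
        refine tsum_congr fun ℓ => ?_
        rw [lintegral_const_mul _ (hmeas ℓ),
          Measure.bind_apply hs (kpow.measurable K ℓ).aemeasurable]
    _ ≤ ∑' ℓ, r ^ ℓ * (c ^ ℓ * μ s) :=
        ENNReal.tsum_le_tsum fun ℓ => by gcongr; exact kpow.bind_le_pow_smul K h ℓ s
    _ = (1 - r * c)⁻¹ * μ s := by
        simp_rw [← mul_assoc, ← mul_pow]
        rw [ENNReal.tsum_mul_right, ENNReal.tsum_geometric]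

end resolvent

end

theorem resolvent_measure_properties_general
    [MeasurableSpace X] (K : Kernel X X)
    (lam : ℝ) (hlam : 0 < lam) (x : X)
    (hZfin : (∑' ℓ : ℕ, ENNReal.ofReal (lam⁻¹ ^ ℓ) * kpow K ℓ x Set.univ) < ⊤) :
    ∀ Z : ℝ≥0∞, Z = (∑' ℓ : ℕ, ENNReal.ofReal (lam⁻¹ ^ ℓ) * kpow K ℓ x Set.univ) →
    ∀ μ : Measure X,
      μ = Z⁻¹ • Measure.sum (fun ℓ : ℕ => ENNReal.ofReal (lam⁻¹ ^ ℓ) • kpow K ℓ x) →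
      IsProbabilityMeasure μ ∧
      μ.bind (fun y => K y) + (ENNReal.ofReal lam * Z⁻¹) • Measure.dirac x =
        ENNReal.ofReal lam • μ ∧
      (∀ ℓ : ℕ, 1 ≤ ℓ → ∀ s : Set X, MeasurableSet s →
        μ.bind (fun y => kpow K ℓ y) s ≤ ENNReal.ofReal (lam ^ ℓ) * μ s) ∧
      ∀ a₁ : ℝ, lam < a₁ →
        (∫⁻ y, (∑' ℓ : ℕ, ENNReal.ofReal (a₁⁻¹ ^ ℓ) * kpow K ℓ y Set.univ) ∂μ) ≤
          ENNReal.ofReal (a₁ / (a₁ - lam)) := by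
  intro Z hZ μ hμ
  set L := ENNReal.ofReal lam
  set r := ENNReal.ofReal lam⁻¹
  have hrL : r * L = 1 := by
    rw [← ENNReal.ofReal_mul (inv_nonneg.2 hlam.le), inv_mul_cancel₀ hlam.ne', ENNReal.ofReal_one]
  have hZ' : Z = resolvent K r x Set.univ := by
    simp_rw [hZ, resolvent.apply K r x .univ, r, ENNReal.ofReal_pow (inv_nonneg.2 hlam.le)]
  have hμ' : μ = Z⁻¹ • resolvent K r x := by
    simp_rw [hμ, resolvent, r, ENNReal.ofReal_pow (inv_nonneg.2 hlam.le)]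
  have : IsFiniteMeasure (resolvent K r x) := ⟨hZ' ▸ hZ ▸ hZfin⟩
  have hprob : IsProbabilityMeasure μ := by rw [hμ', hZ']; infer_instance
  have hident : μ.bind K + (L * Z⁻¹) • Measure.dirac x = L • μ := by
    rw [hμ']; exact resolvent.smul_bind_add_smul_dirac K r x hrL Z⁻¹
  have hle : μ.bind K ≤ L • μ := hident ▸ Measure.le_add_right le_rfl
  refine ⟨hprob, hident, fun ℓ _ s _ => ?_, fun a₁ ha₁ => ?_⟩
  · rw [ENNReal.ofReal_pow hlam.le]
    exact kpow.bind_le_pow_smul K hle ℓ s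
  · calc ∫⁻ y, ∑' ℓ, ENNReal.ofReal (a₁⁻¹ ^ ℓ) * kpow K ℓ y Set.univ ∂μ
        = ∫⁻ y, resolvent K (ENNReal.ofReal a₁⁻¹) y Set.univ ∂μ := by
          simp_rw [resolvent.apply K _ _ .univ,
            ENNReal.ofReal_pow (inv_nonneg.2 (hlam.trans ha₁).le)]
      _ ≤ (1 - ENNReal.ofReal a₁⁻¹ * L)⁻¹ * μ Set.univ :=
          resolvent.lintegral_le K _ hle Set.univ .univ
      _ = ENNReal.ofReal (a₁ / (a₁ - lam)) := by
          rw [measure_univ, mul_one, ENNReal.inv_one_sub_ofReal_inv_mul hlam.le ha₁]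

/-- **Lemma.** If `K` is a sub-Markov kernel, `λ > 0` and `x` satisfies
`Z = ∑_ℓ λ^{-ℓ} K^ℓ(x,X) < ∞`, then the probability measure
`μ = Z^{-1} ∑_ℓ λ^{-ℓ} K^ℓ(x,·)` satisfies `μK = λμ - (λ/Z) δ_x`, hence `μK ≤ λμ`,
`μK^ℓ ≤ λ^ℓ μ` for all `ℓ ≥ 1`, and `∫ μ(dy) ∑_ℓ a₁^{-ℓ} K^ℓ(y,X) ≤ a₁/(a₁-λ)` for every
`a₁ > λ`. -/
theorem resolvent_measure_properties
    [MeasurableSpace X] (K : Kernel X X) (hsub : ∀ x, K x Set.univ ≤ 1)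
    (lam : ℝ) (hlam : 0 < lam) (x : X)
    (hZfin : (∑' ℓ : ℕ, ENNReal.ofReal (lam⁻¹ ^ ℓ) * kpow K ℓ x Set.univ) < ⊤) :
    ∀ Z : ℝ≥0∞, Z = (∑' ℓ : ℕ, ENNReal.ofReal (lam⁻¹ ^ ℓ) * kpow K ℓ x Set.univ) →
    ∀ μ : Measure X,
      μ = Z⁻¹ • Measure.sum (fun ℓ : ℕ => ENNReal.ofReal (lam⁻¹ ^ ℓ) • kpow K ℓ x) →
      IsProbabilityMeasure μ ∧
      μ.bind (fun y => K y) + (ENNReal.ofReal lam * Z⁻¹) • Measure.dirac x =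
        ENNReal.ofReal lam • μ ∧
      (∀ ℓ : ℕ, 1 ≤ ℓ → ∀ s : Set X, MeasurableSet s →
        μ.bind (fun y => kpow K ℓ y) s ≤ ENNReal.ofReal (lam ^ ℓ) * μ s) ∧
      ∀ a₁ : ℝ, lam < a₁ →
        (∫⁻ y, (∑' ℓ : ℕ, ENNReal.ofReal (a₁⁻¹ ^ ℓ) * kpow K ℓ y Set.univ) ∂μ) ≤
          ENNReal.ofReal (a₁ / (a₁ - lam)) :=
  resolvent_measure_properties_general K lam hlam x hZfin

end QSDgen
end

section
/- Assume ξ is super-additive, i.e. ξ(x₁+x₂) ≥ ξ(x₁)+ξ(x₂) coordinatewise for all x₁,x₂∈ℕ^q. Then for every ℓ ≥ 1, every z₁,…,z_ℓ ∈ ℕ^p and every n ≥ 0: ℙ_{z₁+⋯+z_ℓ}(Z_n = 0) ≤ ∏_{i=1}^ℓ ℙ_{z_i}(Z_n = 0). -/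
open MeasureTheory Filter Topology
open scoped ENNReal NNReal

namespace BGW

variable {p q : ℕ}

/-- Mean matrix `𝕍`, where `ν i` is the law of the offspring vector `V_{i,·}`. -/
noncomputable def meanV (ν : Fin p → Measure (Fin q → ℕ)) (i : Fin p) (j : Fin q) : ℝ :=
  ∫ w, (w j : ℝ) ∂(ν i)

/-- Law of the offspring vector `W₁` given `z` couples: sum over all couples of i.i.d. copies
of the `V_{i,·}`'s. -/
noncomputable def offspringLaw (ν : Fin p → Measure (Fin q → ℕ)) (z : Fin p → ℕ) :
    Measure (Fin q → ℕ) :=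
  Measure.map (fun ω (j : Fin q) => ∑ ik : Σ i : Fin p, Fin (z i), ω ik j)
    (Measure.pi fun ik : Σ i : Fin p, Fin (z i) => ν ik.1)

/-- One-step transition law of the bisexual Galton--Watson process: `Z₁ = ξ(W₁)`. -/
noncomputable def stepLaw (ξ : (Fin q → ℕ) → Fin p → ℕ) (ν : Fin p → Measure (Fin q → ℕ))
    (z : Fin p → ℕ) : Measure (Fin p → ℕ) :=
  (offspringLaw ν z).map ξ

/-- Law of `Z_n` starting from `Z₀ = z`. -/
noncomputable def lawZ (ξ : (Fin q → ℕ) → Fin p → ℕ) (ν : Fin p → Measure (Fin q → ℕ)) :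
    ℕ → (Fin p → ℕ) → Measure (Fin p → ℕ)
  | 0, z => Measure.dirac z
  | (n + 1), z => (lawZ ξ ν n z).bind (stepLaw ξ ν)

/-- `ℙ_z(Z_n ≠ 0)`. -/
noncomputable def surviveP (ξ : (Fin q → ℕ) → Fin p → ℕ) (ν : Fin p → Measure (Fin q → ℕ))
    (n : ℕ) (z : Fin p → ℕ) : ℝ≥0∞ :=
  lawZ ξ ν n z {x | x ≠ 0}

/-- The exponential convergence parameter `θ₀`. -/
noncomputable def theta0 (ξ : (Fin q → ℕ) → Fin p → ℕ)
    (ν : Fin p → Measure (Fin q → ℕ)) : ℝ :=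
  sSup {θ : ℝ | 0 < θ ∧ ∃ z : Fin p → ℕ, z ≠ 0 ∧
    0 < atTop.liminf fun n : ℕ => (surviveP ξ ν n z).toReal / θ ^ n}

/-- `E_z(υ^{-T₀})`, computed through the marginal laws (`0` is absorbing, so
`ℙ_z(T₀ ≤ n) = ℙ_z(Z_n = 0)`), with the convention `υ^{-T₀} = +∞` on `{T₀ = ∞}` when `υ < 1`. -/
noncomputable def genT0 (ξ : (Fin q → ℕ) → Fin p → ℕ) (ν : Fin p → Measure (Fin q → ℕ))
    (z : Fin p → ℕ) (υ : ℝ) : ℝ≥0∞ :=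
  ((if z = 0 then 1 else 0) +
      ∑' n : ℕ, ENNReal.ofReal (υ⁻¹ ^ (n + 1)) *
        (lawZ ξ ν (n + 1) z {x | x = 0} - lawZ ξ ν n z {x | x = 0})) +
    (if υ < 1 then (⊤ : ℝ≥0∞) else if υ = 1 then 1 else 0) * ⨅ n : ℕ, surviveP ξ ν n z

/-- The parameter `υ₀`. -/
noncomputable def upsilon0 (ξ : (Fin q → ℕ) → Fin p → ℕ)
    (ν : Fin p → Measure (Fin q → ℕ)) : ℝ :=
  sInf {υ : ℝ | 0 < υ ∧ ∀ z : Fin p → ℕ, genT0 ξ ν z υ < ⊤}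

/-- Assumption (S): the mating function is super-additive and sub-affine. -/
def AssumpS (ξ : (Fin q → ℕ) → Fin p → ℕ) : Prop :=
  ∃ α β : Fin p → ℝ, (∀ i, 0 ≤ α i) ∧ (∀ i, 0 ≤ β i) ∧
    ∀ x₁ x₂ : Fin q → ℕ, ∀ i : Fin p,
      (ξ (x₁ + x₂) i : ℝ) ≤ α i * (∑ j, ((x₁ j : ℝ) + (x₂ j : ℝ))) + β i ∧
      ξ x₁ i + ξ x₂ i ≤ ξ (x₁ + x₂) i

/-- ℕ-valued vectors seen as real vectors. -/
def toR (z : Fin p → ℕ) : Fin p → ℝ := fun i => (z i : ℝ)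

/-- `M` is the function `𝔐(z) = lim_k ξ(⌊k z𝕍⌋)/k`. -/
def IsLimitM (ξ : (Fin q → ℕ) → Fin p → ℕ) (ν : Fin p → Measure (Fin q → ℕ))
    (M : (Fin p → ℝ) → Fin p → ℝ) : Prop :=
  ∀ z : Fin p → ℝ, (∀ i, 0 ≤ z i) →
    Tendsto (fun k : ℕ => fun i : Fin p =>
        (ξ (fun j => ⌊(k : ℝ) * ∑ i', z i' * meanV ν i' j⌋₊) i : ℝ) / (k : ℝ))
      atTop (nhds (M z))

/-- The properties of `𝔐` stated in the context: positively homogeneous, nondecreasing,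
concave on `ℝ₊^p` and bounded on `𝕊`. -/
def MProps (M : (Fin p → ℝ) → Fin p → ℝ) : Prop :=
  (∀ a : ℝ, 0 < a → ∀ z : Fin p → ℝ, (∀ i, 0 ≤ z i) → M (a • z) = a • M z) ∧
  (∀ z z' : Fin p → ℝ, (∀ i, 0 ≤ z i) → z ≤ z' → M z ≤ M z') ∧
  ConcaveOn ℝ {z : Fin p → ℝ | ∀ i, 0 ≤ z i} M ∧
  ∃ C : ℝ, ∀ z : Fin p → ℝ, (∀ i, 0 ≤ z i) → (∑ i, z i) = 1 → ∀ i, M z i ≤ C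

/-- Assumption (P): primitivity of `𝔐`, with primitivity index `n₀`. -/
def AssumpPrim (M : (Fin p → ℝ) → Fin p → ℝ) (n₀ : ℕ) : Prop :=
  1 ≤ n₀ ∧ ∀ m : ℕ, n₀ ≤ m → ∀ z : Fin p → ℝ, (∀ i, 0 ≤ z i) → z ≠ 0 →
    ∀ i, 0 < (M^[m] z) i

/-- The Perron-type data `(λ*, z*, 𝒫)` associated with `𝔐`. -/
def IsPerron (M : (Fin p → ℝ) → Fin p → ℝ) (lam : ℝ) (zs : Fin p → ℝ)
    (P : (Fin p → ℝ) → ℝ) : Prop :=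
  0 < lam ∧ (∀ i, 0 < zs i) ∧ (∑ i, zs i) = 1 ∧
  (∀ z : Fin p → ℝ, (∀ i, 0 ≤ z i) → z ≠ 0 → 0 < P z) ∧
  (∀ a : ℝ, 0 < a → ∀ z : Fin p → ℝ, (∀ i, 0 ≤ z i) → P (a • z) = a * P z) ∧
  ConcaveOn ℝ {z : Fin p → ℝ | ∀ i, 0 ≤ z i} P ∧
  ∀ z : Fin p → ℝ, (∀ i, 0 ≤ z i) →
    Tendsto (fun n : ℕ => fun i : Fin p => (M^[n] z) i / lam ^ n) atTop
      (nhds fun i => P z * zs i)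

/-- The set `Z_I ⊆ 𝕊`. -/
def ZI (I : Finset (Fin p)) : Set (Fin p → ℝ) :=
  {x | (∑ i, x i) = 1 ∧ ∀ i, (i ∈ I → 0 < x i) ∧ (i ∉ I → x i = 0)}

/-- Assumption (C): uniform continuity of `𝔐` on each `Z_I`. -/
def AssumpC (M : (Fin p → ℝ) → Fin p → ℝ) : Prop :=
  ∀ I : Finset (Fin p), I.Nonempty → UniformContinuousOn M (ZI I)

/-- The Lyapunov function `Q_a(z) = 𝒫(z)^a`. -/
noncomputable def Qa (P : (Fin p → ℝ) → ℝ) (a : ℝ) (z : Fin p → ℕ) : ℝ :=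
  P (toR z) ^ a

/-- `f ∈ L^∞(Q_a)`. -/
def memLinfQa (P : (Fin p → ℝ) → ℝ) (a : ℝ) (f : (Fin p → ℕ) → ℝ) : Prop :=
  ∃ C : ℝ, ∀ z : Fin p → ℕ, z ≠ 0 → |f z| ≤ C * Qa P a z

/-- The norm `‖f‖_{Q_a}`. -/
noncomputable def normQa (P : (Fin p → ℝ) → ℝ) (a : ℝ) (f : (Fin p → ℕ) → ℝ) : ℝ :=
  sInf {C : ℝ | 0 ≤ C ∧ ∀ z : Fin p → ℕ, z ≠ 0 → |f z| ≤ C * Qa P a z}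

/-- `μ ∈ M(Q_a)`: a nonnegative measure on `ℕ^p∖{0}` integrating `Q_a`. -/
def memMQa (P : (Fin p → ℝ) → ℝ) (a : ℝ) (μ : Measure (Fin p → ℕ)) : Prop :=
  μ {x | x = 0} = 0 ∧ (∫⁻ z, ENNReal.ofReal (Qa P a z) ∂μ) < ⊤

/-- Law of `Z_n` when `Z₀ ∼ μ`. -/
noncomputable def lawFrom (ξ : (Fin q → ℕ) → Fin p → ℕ) (ν : Fin p → Measure (Fin q → ℕ))
    (μ : Measure (Fin p → ℕ)) (n : ℕ) : Measure (Fin p → ℕ) :=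
  μ.bind (lawZ ξ ν n)

/-- `μ` is a quasi-stationary distribution for the process. -/
def IsQSD (ξ : (Fin q → ℕ) → Fin p → ℕ) (ν : Fin p → Measure (Fin q → ℕ))
    (μ : Measure (Fin p → ℕ)) : Prop :=
  IsProbabilityMeasure μ ∧ μ {x | x = 0} = 0 ∧
  ∀ n : ℕ, 0 < lawFrom ξ ν μ n {x | x ≠ 0} ∧
    ∀ A : Set (Fin p → ℕ), MeasurableSet A →
      lawFrom ξ ν μ n (A ∩ {x | x ≠ 0}) = lawFrom ξ ν μ n {x | x ≠ 0} * μ A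

/-- `μ` has absorption parameter `θ`. -/
def AbsorbParam (ξ : (Fin q → ℕ) → Fin p → ℕ) (ν : Fin p → Measure (Fin q → ℕ))
    (μ : Measure (Fin p → ℕ)) (θ : ℝ) : Prop :=
  ∀ n : ℕ, lawFrom ξ ν μ n {x | x ≠ 0} = ENNReal.ofReal (θ ^ n)

/-- Aperiodicity of the process. -/
def Aperiodic (ξ : (Fin q → ℕ) → Fin p → ℕ) (ν : Fin p → Measure (Fin q → ℕ)) : Prop :=
  ∀ z : Fin p → ℕ, (∀ n : ℕ, 1 ≤ n → lawZ ξ ν n z {x | x = z} = 0) ∨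
    ∃ n₀ : ℕ, ∀ n : ℕ, n₀ ≤ n → 0 < lawZ ξ ν n z {x | x = z}

/-- Irreducibility of the process on `ℕ^p∖{0}`. -/
def IrreducibleZ (ξ : (Fin q → ℕ) → Fin p → ℕ) (ν : Fin p → Measure (Fin q → ℕ)) : Prop :=
  ∀ x y : Fin p → ℕ, x ≠ 0 → y ≠ 0 → ∃ n : ℕ, 0 < lawZ ξ ν n x {w | w = y}


/-!
Write `qₙ(z) = ℙ_z(Zₙ = 0)`. Conditioning on the first generation gives
`qₙ₊₁(z) = E[qₙ(ξ(W))]` with `W` the offspring of `z` couples, and the offspring of `z₁ + z₂`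
couples is the sum of independent offspring `W₁`, `W₂` of `z₁` and of `z₂` couples. By induction
on `n`, `qₙ` is submultiplicative: a submultiplicative function bounded by `1` is antitone, so
super-additivity of `ξ` gives `qₙ(ξ(W₁ + W₂)) ≤ qₙ(ξ W₁ + ξ W₂) ≤ qₙ(ξ W₁) qₙ(ξ W₂)`, and
independence factors the expectation.
-/

open scoped MeasureTheory

theorem map_pi_sum_eq_conv {α ι κ γ : Type*} [AddCommMonoid α] [MeasurableSpace α]
    [MeasurableAdd₂ α] [Fintype ι] [Fintype κ] [Fintype γ] (e : ι ⊕ κ ≃ γ)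
    (μ : γ → Measure α) [∀ c, SigmaFinite (μ c)] :
    (Measure.pi μ).map (fun ω => ∑ c, ω c) =
      (Measure.pi fun a => μ (e (.inl a))).map (fun ω => ∑ a, ω a) ∗
        (Measure.pi fun b => μ (e (.inr b))).map (fun ω => ∑ b, ω b) := by
  have hΦ := (measurePreserving_piCongrLeft (α := fun _ => α) μ e).comp
    (measurePreserving_sumPiEquivProdPi_symm fun s => μ (e s))
  have hsum : (fun ω : γ → α => ∑ c, ω c) ∘ (MeasurableEquiv.piCongrLeft (fun _ => α) e ∘
      (MeasurableEquiv.sumPiEquivProdPi fun _ => α).symm) =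
      (fun x : α × α => x.1 + x.2) ∘ Prod.map (fun ω => ∑ a, ω a) (fun ω => ∑ b, ω b) := by
    funext ω
    simp [← e.sum_comp, Fintype.sum_sum_type, MeasurableEquiv.piCongrLeft_apply_apply,
      MeasurableEquiv.coe_sumPiEquivProdPi_symm, Equiv.sumPiEquivProdPi]
  rw [← hΦ.map_eq, Measure.map_map (by fun_prop) hΦ.measurable, hsum,
    ← Measure.map_map (by fun_prop) (by fun_prop),
    ← Measure.map_prod_map _ _ (by fun_prop) (by fun_prop)]
  rfl

theorem antitone_of_le_mul {M : Type*} [AddCommMonoid M] [Preorder M] [ExistsAddOfLE M]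
    {f : M → ℝ≥0∞} (hmul : ∀ x y, f (x + y) ≤ f x * f y) (hle : ∀ x, f x ≤ 1) : Antitone f := by
  intro x y hxy
  obtain ⟨c, rfl⟩ := exists_add_of_le hxy
  exact (hmul x c).trans (mul_le_of_le_one_right' (hle c))

section

variable (ξ : (Fin q → ℕ) → Fin p → ℕ) (ν : Fin p → Measure (Fin q → ℕ))

theorem offspringLaw_eq_map_sum (z : Fin p → ℕ) :
    offspringLaw ν z =
      (Measure.pi fun ik : Σ i, Fin (z i) => ν ik.1).map fun ω => ∑ ik, ω ik := by
  simp only [offspringLaw, ← Finset.sum_apply]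

theorem offspringLaw_add [∀ i, SigmaFinite (ν i)] (z₁ z₂ : Fin p → ℕ) :
    offspringLaw ν (z₁ + z₂) = offspringLaw ν z₁ ∗ offspringLaw ν z₂ := by
  simp only [offspringLaw_eq_map_sum]
  exact map_pi_sum_eq_conv ((Equiv.sigmaSumDistrib _ _).symm.trans
    (Equiv.sigmaCongrRight fun _ => finSumFinEquiv)) fun ik => ν ik.1

theorem lawZ_succ (n : ℕ) (z : Fin p → ℕ) :
    lawZ ξ ν (n + 1) z = (stepLaw ξ ν z).bind (lawZ ξ ν n) := by
  induction n generalizing z with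
  | zero =>
    exact (Measure.dirac_bind (measurable_of_countable _) z).trans Measure.bind_dirac.symm
  | succ n ih =>
    rw [lawZ, ih, Measure.bind_bind (measurable_of_countable _).aemeasurable
      (measurable_of_countable _).aemeasurable]
    rfl

noncomputable def extinctionProb (n : ℕ) (z : Fin p → ℕ) : ℝ≥0∞ :=
  lawZ ξ ν n z {x | x = 0}

theorem extinctionProb_zero (z : Fin p → ℕ) :
    extinctionProb ξ ν 0 z = if z = 0 then 1 else 0 := by
  simp [extinctionProb, lawZ, Set.indicator]

theorem extinctionProb_succ (n : ℕ) (z : Fin p → ℕ) :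
    extinctionProb ξ ν (n + 1) z = ∫⁻ w, extinctionProb ξ ν n (ξ w) ∂offspringLaw ν z := by
  rw [extinctionProb, lawZ_succ, Measure.bind_apply MeasurableSet.of_discrete
    (measurable_of_countable _).aemeasurable, stepLaw,
    lintegral_map (measurable_of_countable _) (measurable_of_countable _)]
  rfl

variable [∀ i, IsProbabilityMeasure (ν i)]

instance isProbabilityMeasure_offspringLaw (z : Fin p → ℕ) :
    IsProbabilityMeasure (offspringLaw ν z) :=
  Measure.isProbabilityMeasure_map (measurable_of_countable _).aemeasurable

instance isProbabilityMeasure_stepLaw (z : Fin p → ℕ) :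
    IsProbabilityMeasure (stepLaw ξ ν z) :=
  Measure.isProbabilityMeasure_map (measurable_of_countable _).aemeasurable

instance isProbabilityMeasure_lawZ (n : ℕ) (z : Fin p → ℕ) :
    IsProbabilityMeasure (lawZ ξ ν n z) := by
  induction n with
  | zero => exact Measure.dirac.isProbabilityMeasure
  | succ n ih =>
    exact isProbabilityMeasure_bind (measurable_of_countable _).aemeasurable
      (ae_of_all _ fun _ => inferInstance)

theorem extinctionProb_le_one (n : ℕ) (z : Fin p → ℕ) : extinctionProb ξ ν n z ≤ 1 :=
  prob_le_one

theorem extinctionProb_add_le (hξ : ∀ x₁ x₂, ξ x₁ + ξ x₂ ≤ ξ (x₁ + x₂)) (n : ℕ)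
    (z₁ z₂ : Fin p → ℕ) :
    extinctionProb ξ ν n (z₁ + z₂) ≤ extinctionProb ξ ν n z₁ * extinctionProb ξ ν n z₂ := by
  induction n generalizing z₁ z₂ with
  | zero =>
    simp only [extinctionProb_zero, add_eq_zero]
    split_ifs <;> simp_all
  | succ n ih =>
    have hanti : Antitone (extinctionProb ξ ν n) :=
      antitone_of_le_mul ih (extinctionProb_le_one ξ ν n)
    rw [extinctionProb_succ, extinctionProb_succ, extinctionProb_succ, offspringLaw_add,
      Measure.lintegral_conv (measurable_of_countable _),
      ← lintegral_lintegral_mul (measurable_of_countable _).aemeasurable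
        (measurable_of_countable _).aemeasurable]
    exact lintegral_mono fun w₁ => lintegral_mono fun w₂ => (hanti (hξ w₁ w₂)).trans (ih _ _)

theorem extinctionProb_sum_le_prod (hξ : ∀ x₁ x₂, ξ x₁ + ξ x₂ ≤ ξ (x₁ + x₂)) (n : ℕ)
    {ι : Type*} {s : Finset ι} (hs : s.Nonempty) (z : ι → Fin p → ℕ) :
    extinctionProb ξ ν n (∑ i ∈ s, z i) ≤ ∏ i ∈ s, extinctionProb ξ ν n (z i) := by
  simpa only [toAdd_prod, toAdd_ofAdd] using Finset.le_prod_nonempty_of_submultiplicative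
    (fun x : Multiplicative (Fin p → ℕ) => extinctionProb ξ ν n x.toAdd)
    (fun x y => extinctionProb_add_le ξ ν hξ n x.toAdd y.toAdd) hs
    fun i => Multiplicative.ofAdd (z i)

end

theorem extinction_prob_superadditive_general
    {p q : ℕ}
    (ξ : (Fin q → ℕ) → Fin p → ℕ)
    (ν : Fin p → Measure (Fin q → ℕ)) (hν : ∀ i, IsProbabilityMeasure (ν i))
    (hsuper : ∀ x₁ x₂ : Fin q → ℕ, ∀ i : Fin p, ξ x₁ i + ξ x₂ i ≤ ξ (x₁ + x₂) i) :
    ∀ ℓ : ℕ, 1 ≤ ℓ → ∀ z : Fin ℓ → (Fin p → ℕ), ∀ n : ℕ,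
      lawZ ξ ν n (∑ i, z i) {x | x = 0} ≤ ∏ i, lawZ ξ ν n (z i) {x | x = 0} := by
  intro ℓ hℓ z n
  exact extinctionProb_sum_le_prod ξ ν (fun x₁ x₂ i => hsuper x₁ x₂ i) n
    (Finset.univ_nonempty_iff.2 ⟨⟨0, hℓ⟩⟩) z

/-- If `ξ` is super-additive then
`ℙ_{z₁+⋯+z_ℓ}(Z_n = 0) ≤ ∏ᵢ ℙ_{zᵢ}(Z_n = 0)`. -/
theorem extinction_prob_superadditive
    {p q : ℕ} (hp : 1 ≤ p) (hq : 1 ≤ q)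
    (ξ : (Fin q → ℕ) → Fin p → ℕ) (hξ0 : ξ 0 = 0)
    (ν : Fin p → Measure (Fin q → ℕ)) (hν : ∀ i, IsProbabilityMeasure (ν i))
    (hint : ∀ i j, (∫⁻ w, (w j : ℝ≥0∞) ∂(ν i)) < ⊤)
    (hmean : ∀ j, 0 < ∑ i, meanV ν i j)
    (hsuper : ∀ x₁ x₂ : Fin q → ℕ, ∀ i : Fin p, ξ x₁ i + ξ x₂ i ≤ ξ (x₁ + x₂) i) :
    ∀ ℓ : ℕ, 1 ≤ ℓ → ∀ z : Fin ℓ → (Fin p → ℕ), ∀ n : ℕ,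
      lawZ ξ ν n (∑ i, z i) {x | x = 0} ≤ ∏ i, lawZ ξ ν n (z i) {x | x = 0} :=
  extinction_prob_superadditive_general ξ ν hν hsuper

end BGW
end

section
/- Assume ξ is super-additive, i.e. ξ(x₁+x₂) ≥ ξ(x₁)+ξ(x₂) coordinatewise for all x₁,x₂∈ℕ^q. Then the bisexual Galton–Watson process is stochastically non-decreasing in its initial condition: if z ≤ z' coordinatewise in ℕ^p, then for every n ≥ 0 and every coordinatewise non-decreasing function f:ℕ^p→ℝ₊ one has E_z[f(Z_n)] ≤ E_{z'}[f(Z_n)]; in particular ℙ_z(Z_n ≠ 0) ≤ ℙ_{z'}(Z_n ≠ 0). -/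
open MeasureTheory Filter Topology
open scoped ENNReal NNReal

namespace BGW

variable {p q : ℕ}

section Aux

open Function

/-- Marginal of a product of probability measures along an injection of index types. -/
lemma map_pi_eval_comp {ι κ : Type*} [Fintype ι] [Fintype κ] {Ω : Type*}
    [MeasurableSpace Ω] [Countable Ω] [DiscreteMeasurableSpace Ω]
    (e : ι → κ) (he : Function.Injective e) (μ : κ → Measure Ω)
    [∀ k, IsProbabilityMeasure (μ k)] :
    Measure.map (fun ω (i : ι) => ω (e i)) (Measure.pi μ) = Measure.pi (fun i => μ (e i)) := by
  classical
  apply Measure.ext_of_singleton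
  intro a
  have hm : Measurable (fun (ω : κ → Ω) (i : ι) => ω (e i)) := Measurable.of_discrete
  rw [Measure.map_apply hm (MeasurableSet.singleton a)]
  set S : κ → Set Ω := fun k => if h : ∃ i, e i = k then {a h.choose} else Set.univ with hS
  have hSe : ∀ i : ι, S (e i) = {a i} := by
    intro i
    have h : ∃ i', e i' = e i := ⟨i, rfl⟩
    have : h.choose = i := he h.choose_spec
    simp [hS, dif_pos h, this]
  have hpre : (fun ω (i : ι) => ω (e i)) ⁻¹' {a} = Set.univ.pi S := by
    ext ω
    simp only [Set.mem_preimage, Set.mem_singleton_iff, funext_iff, Set.mem_pi, Set.mem_univ,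
      forall_true_left]
    constructor
    · intro hω k
      by_cases h : ∃ i, e i = k
      · simp only [hS, dif_pos h]
        have h2 := hω h.choose
        rw [h.choose_spec] at h2
        simp [h2]
      · simp [hS, dif_neg h]
    · intro hω i
      have := hω (e i)
      rw [hSe i] at this
      exact this
  rw [hpre, Measure.pi_pi]
  rw [← Set.univ_pi_singleton a, Measure.pi_pi]
  have hsub : (Finset.univ.image e : Finset κ) ⊆ Finset.univ := Finset.subset_univ _
  have h1 : ∀ k ∈ Finset.univ, k ∉ Finset.univ.image e → μ k (S k) = 1 := by
    intro k _ hk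
    have h : ¬ ∃ i, e i = k := by
      intro ⟨i, hi⟩; exact hk (Finset.mem_image.2 ⟨i, Finset.mem_univ i, hi⟩)
    simp [hS, dif_neg h]
  calc ∏ k, μ k (S k) = ∏ k ∈ Finset.univ.image e, μ k (S k) := by
        refine (Finset.prod_subset hsub ?_).symm
        exact h1
    _ = ∏ i, μ (e i) (S (e i)) := Finset.prod_image (fun x _ y _ h => he h)
    _ = ∏ i, μ (e i) {a i} := by
        refine Finset.prod_congr rfl fun i _ => by rw [hSe i]

variable {p q : ℕ}

/-- One-step stochastic monotonicity from super-additivity of the mating function. -/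
lemma stepLaw_mono (ξ : (Fin q → ℕ) → Fin p → ℕ)
    (ν : Fin p → Measure (Fin q → ℕ)) (hν : ∀ i, IsProbabilityMeasure (ν i))
    (hsuper : ∀ x₁ x₂ : Fin q → ℕ, ∀ i : Fin p, ξ x₁ i + ξ x₂ i ≤ ξ (x₁ + x₂) i)
    {z z' : Fin p → ℕ} (hz : z ≤ z')
    (g : (Fin p → ℕ) → ℝ≥0∞) (hg : Monotone g) :
    (∫⁻ x, g x ∂(stepLaw ξ ν z)) ≤ ∫⁻ x, g x ∂(stepLaw ξ ν z') := by
  classical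
  haveI : ∀ i, IsProbabilityMeasure (ν i) := hν
  set e : (Σ i : Fin p, Fin (z i)) → (Σ i : Fin p, Fin (z' i)) :=
    fun ik => ⟨ik.1, Fin.castLE (hz ik.1) ik.2⟩ with he_def
  have he : Function.Injective e := by
    rintro ⟨i, k⟩ ⟨i', k'⟩ h
    simp only [he_def, Sigma.mk.inj_iff] at h
    obtain ⟨rfl, h2⟩ := h
    simp only [heq_eq_eq] at h2
    exact congrArg _ (Fin.castLE_injective _ h2)
  have hmeas_ξ : Measurable ξ := Measurable.of_discrete
  have hmeas_g : Measurable g := Measurable.of_discrete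
  have hmeas_sum : ∀ (α : Type) [Fintype α] (F : ((α → (Fin q → ℕ))) → (Fin q → ℕ)),
      Measurable F := fun α _ F => Measurable.of_discrete
  -- rewrite both sides as integrals over the big product space
  have hmarg : Measure.pi (fun ik : Σ i : Fin p, Fin (z i) => ν ik.1)
      = Measure.map (fun ω (ik : Σ i : Fin p, Fin (z i)) => ω (e ik))
          (Measure.pi (fun ik : Σ i : Fin p, Fin (z' i) => ν ik.1)) := by
    rw [map_pi_eval_comp e he]
  rw [stepLaw, stepLaw, offspringLaw, offspringLaw,
    Measure.map_map hmeas_ξ Measurable.of_discrete,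
    Measure.map_map hmeas_ξ Measurable.of_discrete,
    lintegral_map hmeas_g Measurable.of_discrete,
    lintegral_map hmeas_g Measurable.of_discrete, hmarg,
    lintegral_map Measurable.of_discrete Measurable.of_discrete]
  refine lintegral_mono fun ω => ?_
  simp only [Function.comp_apply]
  apply hg
  intro i
  set x₁ : Fin q → ℕ := fun j => ∑ ik : Σ i : Fin p, Fin (z i), ω (e ik) j with hx₁
  set x₂ : Fin q → ℕ := fun j =>
    ∑ ik ∈ Finset.univ \ Finset.univ.image e, ω ik j with hx₂
  have hsplit : (fun j => ∑ ik : Σ i : Fin p, Fin (z' i), ω ik j) = x₁ + x₂ := by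
    funext j
    have himg : ∑ ik ∈ Finset.univ.image e, ω ik j
        = ∑ ik : Σ i : Fin p, Fin (z i), ω (e ik) j :=
      Finset.sum_image (fun x _ y _ h => he h)
    calc ∑ ik : Σ i : Fin p, Fin (z' i), ω ik j
        = ∑ ik ∈ Finset.univ \ Finset.univ.image e, ω ik j
            + ∑ ik ∈ Finset.univ.image e, ω ik j :=
          (Finset.sum_sdiff (Finset.subset_univ _)).symm
      _ = x₁ j + x₂ j := by rw [himg, Nat.add_comm]
  rw [hsplit]
  calc ξ x₁ i ≤ ξ x₁ i + ξ x₂ i := Nat.le_add_right _ _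
    _ ≤ ξ (x₁ + x₂) i := hsuper x₁ x₂ i

/-- Stochastic monotonicity of `lawZ` in the initial condition, `ℝ≥0∞` version. -/
lemma lawZ_mono (ξ : (Fin q → ℕ) → Fin p → ℕ)
    (ν : Fin p → Measure (Fin q → ℕ)) (hν : ∀ i, IsProbabilityMeasure (ν i))
    (hsuper : ∀ x₁ x₂ : Fin q → ℕ, ∀ i : Fin p, ξ x₁ i + ξ x₂ i ≤ ξ (x₁ + x₂) i)
    (n : ℕ) :
    ∀ {z z' : Fin p → ℕ}, z ≤ z' → ∀ g : (Fin p → ℕ) → ℝ≥0∞, Monotone g →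
      (∫⁻ x, g x ∂(lawZ ξ ν n z)) ≤ ∫⁻ x, g x ∂(lawZ ξ ν n z') := by
  induction n with
  | zero =>
    intro z z' hz g hg
    simp only [lawZ, lintegral_dirac]
    exact hg hz
  | succ n ih =>
    intro z z' hz g hg
    have hker : Measurable (stepLaw ξ ν) := Measurable.of_discrete
    have hmg : Measurable g := Measurable.of_discrete
    rw [lawZ, lawZ, Measure.lintegral_bind hker.aemeasurable hmg.aemeasurable,
      Measure.lintegral_bind hker.aemeasurable hmg.aemeasurable]
    exact ih hz (fun x => ∫⁻ y, g y ∂(stepLaw ξ ν x))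
      (fun x x' hxx' => stepLaw_mono ξ ν hν hsuper hxx' g hg)

end Aux

/-- If `ξ` is super-additive then the process is stochastically non-decreasing in its initial
condition: if `z ≤ z'` then `E_z[f(Z_n)] ≤ E_{z'}[f(Z_n)]` for every non-decreasing
`f : ℕ^p → ℝ₊`; in particular `ℙ_z(Z_n ≠ 0) ≤ ℙ_{z'}(Z_n ≠ 0)`. -/
theorem stochastically_monotone
    {p q : ℕ} (hp : 1 ≤ p) (hq : 1 ≤ q)
    (ξ : (Fin q → ℕ) → Fin p → ℕ) (hξ0 : ξ 0 = 0)
    (ν : Fin p → Measure (Fin q → ℕ)) (hν : ∀ i, IsProbabilityMeasure (ν i))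
    (hint : ∀ i j, (∫⁻ w, (w j : ℝ≥0∞) ∂(ν i)) < ⊤)
    (hmean : ∀ j, 0 < ∑ i, meanV ν i j)
    (hsuper : ∀ x₁ x₂ : Fin q → ℕ, ∀ i : Fin p, ξ x₁ i + ξ x₂ i ≤ ξ (x₁ + x₂) i) :
    ∀ z z' : Fin p → ℕ, z ≤ z' → ∀ n : ℕ,
      (∀ f : (Fin p → ℕ) → ℝ, (∀ x, 0 ≤ f x) → Monotone f →
        (∫⁻ y, ENNReal.ofReal (f y) ∂(lawZ ξ ν n z)) ≤
          ∫⁻ y, ENNReal.ofReal (f y) ∂(lawZ ξ ν n z')) ∧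
      surviveP ξ ν n z ≤ surviveP ξ ν n z' := by
  intro z z' hz n
  constructor
  · intro f hf hmono
    exact lawZ_mono ξ ν hν hsuper n hz (fun y => ENNReal.ofReal (f y))
      (fun a b hab => ENNReal.ofReal_le_ofReal (hmono hab))
  · have hs : MeasurableSet {x : Fin p → ℕ | x ≠ 0} := MeasurableSet.of_discrete
    have hrw : ∀ w : Fin p → ℕ, lawZ ξ ν n w {x | x ≠ 0}
        = ∫⁻ x, ({x : Fin p → ℕ | x ≠ 0}).indicator (fun _ => (1 : ℝ≥0∞)) x
            ∂(lawZ ξ ν n w) := fun w => (lintegral_indicator_one hs).symm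
    have hmono : Monotone (({x : Fin p → ℕ | x ≠ 0}).indicator
        (fun _ => (1 : ℝ≥0∞))) := by
      intro a b hab
      by_cases ha : a ≠ 0
      · have hb : b ≠ 0 := by
          intro hb0
          apply ha
          refine le_antisymm ?_ (by intro i; exact Nat.zero_le _)
          rw [← hb0]; exact hab
        simp [Set.indicator_of_mem, ha, hb]
      · simp only [ne_eq, not_not] at ha
        simp [ha]
    unfold surviveP
    rw [hrw z, hrw z']
    exact lawZ_mono ξ ν hν hsuper n hz _ hmono


end BGW
end
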